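/- For two non-atomic Borel probability measures μ and ν on [0,1] with distribution functions F and G, the generalized monomials satisfy |q_{2k}(x) − q_{2k,ν}(x)| ≤ 2‖F−G‖_∞ x^k/(k−1)! and |q_{2k+1}(x) − q_{2k+1,ν}(x)| ≤ 2‖F−G‖_∞ x^k/(k−1)! for all x ∈ [0,1] and k ≥ 1, and the analogous estimates hold for p_{2k} and p_{2k+1}. -/

import Mathlib

open MeasureTheory Set Real Filter

noncomputable def genP (μ : Measure ℝ) : ℕ → ℝ → ℝ
  | 0 => fun _ => 1
  | k + 1 => fun x =>
      if Odd (k + 1) then ∫ t in (0:ℝ)..x, genP μ k t ∂μ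
      else ∫ t in (0:ℝ)..x, genP μ k t

noncomputable def genQ (μ : Measure ℝ) : ℕ → ℝ → ℝ
  | 0 => fun _ => 1
  | k + 1 => fun x =>
      if Odd (k + 1) then ∫ t in (0:ℝ)..x, genQ μ k t
      else ∫ t in (0:ℝ)..x, genQ μ k t ∂μ

noncomputable def genCosh (μ : Measure ℝ) (z : ℝ) (x : ℝ) : ℝ :=
  ∑' k : ℕ, z ^ (2 * k) * genP μ (2 * k) x

noncomputable def genSinh (μ : Measure ℝ) (z : ℝ) (x : ℝ) : ℝ :=
  ∑' k : ℕ, z ^ (2 * k + 1) * genQ μ (2 * k + 1) x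

/-- sup-distance between distribution functions on [0,1] -/
noncomputable def distSup (μ ν : Measure ℝ) : ℝ :=
  ⨆ x : Set.Icc (0:ℝ) 1, |(μ (Set.Icc 0 (x:ℝ))).toReal - (ν (Set.Icc 0 (x:ℝ))).toReal|

/-!
Fubini's theorem merges two integrations into one Volterra step: for `x ≥ 0` and `F = p₁`, which
is the distribution function of `μ` on `[0, ∞)` since `μ` has no atoms,
`∫₀ˣ (∫₀ᵗ f) dμ(t) = ∫₀ˣ f(s) (F x - F s) ds`.
So `q_{2k}` and `p_{2k+1}` are the iterates of `f ↦ ∫₀ˣ f(s) (F x - F s) ds` started at `1` and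
at `F`; they lie between `0` and `x^k / k!`. Splitting
`u (F x - F s) - v (G x - G s) = (u - v) (F x - F s) + v ((F - G) x - (F - G) s)`
turns the bound `2‖F - G‖ x^k / (k-1)!` on their differences into an induction on `k`, and one
more integration in `ds` gives the bounds for `q_{2k+1}` and `p_{2k}`.
-/

open scoped Nat

noncomputable def volterra (Φ u : ℝ → ℝ) (x : ℝ) : ℝ :=
  ∫ s in (0:ℝ)..x, u s * (Φ x - Φ s)

lemma abs_intervalIntegral_le_mul_pow {f : ℝ → ℝ} {c x : ℝ} {n : ℕ} (hx : 0 ≤ x)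
    (hf : ∀ s ∈ Ioc 0 x, |f s| ≤ c * s ^ n) :
    |∫ s in (0:ℝ)..x, f s| ≤ c * x ^ (n + 1) / (n + 1) := by
  have hbound := intervalIntegral.norm_integral_le_of_norm_le hx
    (ae_of_all _ fun s hs => (Real.norm_eq_abs (f s)).trans_le (hf s hs))
    ((continuous_const.mul (continuous_pow n)).intervalIntegrable (μ := volume) 0 x)
  rwa [intervalIntegral.integral_const_mul, integral_pow, zero_pow n.succ_ne_zero, sub_zero,
    ← mul_div_assoc] at hbound

lemma abs_mul_sub_sub_mul_sub_le {a b A B D : ℝ} (ha : 0 ≤ a) (haA : a ≤ A) (hA : A ≤ 1)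
    (hb : 0 ≤ b) (hbB : b ≤ B) (hB : B ≤ 1) (hab : |a - b| ≤ D) (hAB : |A - B| ≤ D) :
    |a * (A - a) - b * (B - b)| ≤ 2 * D := by
  rw [abs_le] at hab hAB ⊢
  constructor <;> nlinarith

section Volterra

variable {Φ Ψ : ℝ → ℝ} {D x : ℝ}

lemma intervalIntegrable_volterra_integrand {u : ℝ → ℝ} (hΦ : Monotone Φ) (hu : Continuous u)
    (a b : ℝ) : IntervalIntegrable (fun s => u s * (Φ x - Φ s)) volume a b :=
  Antitone.intervalIntegrable (fun _ _ h => sub_le_sub_left (hΦ h) _) |>.continuousOn_mul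
    hu.continuousOn

lemma volterra_mem_Icc {u : ℝ → ℝ} {k : ℕ} (hΦ : Monotone Φ)
    (hΦ01 : MapsTo Φ (Icc 0 1) (Icc 0 1)) (hu : Continuous u)
    (hu01 : ∀ s ∈ Icc (0:ℝ) 1, u s ∈ Icc 0 (s ^ k / k !)) (hx : x ∈ Icc (0:ℝ) 1) :
    volterra Φ u x ∈ Icc 0 (x ^ (k + 1) / (k + 1)!) := by
  have hkernel : ∀ s ∈ Icc 0 x, Φ x - Φ s ∈ Icc 0 1 := fun s hs =>
    ⟨sub_nonneg.2 (hΦ hs.2), by linarith [(hΦ01 hx).2, (hΦ01 ⟨hs.1, hs.2.trans hx.2⟩).1]⟩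
  have hu' : ∀ s ∈ Icc 0 x, u s ∈ Icc 0 (s ^ k / k !) := fun s hs =>
    hu01 s ⟨hs.1, hs.2.trans hx.2⟩
  refine ⟨intervalIntegral.integral_nonneg hx.1 fun s hs =>
    mul_nonneg (hu' s hs).1 (hkernel s hs).1, ?_⟩
  calc volterra Φ u x ≤ ∫ s in (0:ℝ)..x, s ^ k / k ! := by
        refine intervalIntegral.integral_mono_on hx.1
          (intervalIntegrable_volterra_integrand hΦ hu 0 x)
          ((continuous_pow k).div_const _ |>.intervalIntegrable 0 x) fun s hs => ?_
        simpa using mul_le_mul (hu' s hs).2 (hkernel s hs).2 (hkernel s hs).1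
          ((hu' s hs).1.trans (hu' s hs).2)
    _ = x ^ (k + 1) / (k + 1)! := by
        rw [intervalIntegral.integral_div, integral_pow, Nat.factorial_succ]
        push_cast
        field_simp
        simp

lemma abs_volterra_sub_volterra_le {u v : ℝ → ℝ} {α : ℝ} {k : ℕ} (hΦ : Monotone Φ)
    (hΨ : Monotone Ψ) (hΦ01 : MapsTo Φ (Icc 0 1) (Icc 0 1))
    (hΦΨ : ∀ s ∈ Icc (0:ℝ) 1, |Φ s - Ψ s| ≤ D) (hu : Continuous u) (hv : Continuous v)
    (hx : x ∈ Icc (0:ℝ) 1) (huv : ∀ s ∈ Icc 0 x, |u s - v s| ≤ α * s ^ k)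
    (hv_le : ∀ s ∈ Icc 0 x, |v s| ≤ s ^ k / k !) :
    |volterra Φ u x - volterra Ψ v x| ≤ (α + 2 * D / k !) * x ^ (k + 1) / (k + 1) := by
  rw [volterra, volterra, ← intervalIntegral.integral_sub
    (intervalIntegrable_volterra_integrand hΦ hu 0 x)
    (intervalIntegrable_volterra_integrand hΨ hv 0 x)]
  refine abs_intervalIntegral_le_mul_pow hx.1 fun s hs => ?_
  have hs' : s ∈ Icc 0 x := Ioc_subset_Icc_self hs
  have hs1 : s ∈ Icc (0:ℝ) 1 := ⟨hs'.1, hs'.2.trans hx.2⟩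
  have hkernel : |Φ x - Φ s| ≤ 1 := abs_sub_le_iff.2
    ⟨by linarith [(hΦ01 hx).2, (hΦ01 hs1).1], by linarith [(hΦ01 hx).1, (hΦ01 hs1).2]⟩
  have hdiff : |(Φ x - Ψ x) - (Φ s - Ψ s)| ≤ 2 * D := by
    linarith [abs_sub (Φ x - Ψ x) (Φ s - Ψ s), hΦΨ x hx, hΦΨ s hs1]
  calc |u s * (Φ x - Φ s) - v s * (Ψ x - Ψ s)|
      = |(u s - v s) * (Φ x - Φ s) + v s * ((Φ x - Ψ x) - (Φ s - Ψ s))| := by ring_nf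
    _ ≤ α * s ^ k * 1 + s ^ k / k ! * (2 * D) := by
        refine (abs_add_le _ _).trans ?_
        rw [abs_mul, abs_mul]
        exact add_le_add
          (mul_le_mul (huv s hs') hkernel (abs_nonneg _) ((abs_nonneg _).trans (huv s hs')))
          (mul_le_mul (hv_le s hs') hdiff (abs_nonneg _) ((abs_nonneg _).trans (hv_le s hs')))
    _ = (α + 2 * D / k !) * s ^ k := by ring

/-- For `u = Φ`, `v = Ψ` the splitting of `abs_volterra_sub_volterra_le` only gives `3 D x`. -/
lemma abs_volterra_self_sub_volterra_self_le (hΦ : Monotone Φ) (hΨ : Monotone Ψ)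
    (hΦc : Continuous Φ) (hΨc : Continuous Ψ) (hΦ01 : MapsTo Φ (Icc 0 1) (Icc 0 1))
    (hΨ01 : MapsTo Ψ (Icc 0 1) (Icc 0 1)) (hΦΨ : ∀ s ∈ Icc (0:ℝ) 1, |Φ s - Ψ s| ≤ D)
    (hx : x ∈ Icc (0:ℝ) 1) :
    |volterra Φ Φ x - volterra Ψ Ψ x| ≤ 2 * D * x := by
  rw [volterra, volterra, ← intervalIntegral.integral_sub
    (intervalIntegrable_volterra_integrand hΦ hΦc 0 x)
    (intervalIntegrable_volterra_integrand hΨ hΨc 0 x)]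
  refine (abs_intervalIntegral_le_mul_pow (c := 2 * D) (n := 0) hx.1 fun s hs => ?_).trans_eq
    (by simp)
  have hs1 : s ∈ Icc (0:ℝ) 1 := ⟨hs.1.le, hs.2.trans hx.2⟩
  rw [pow_zero, mul_one]
  exact abs_mul_sub_sub_mul_sub_le (hΦ01 hs1).1 (hΦ hs.2) (hΦ01 hx).2 (hΨ01 hs1).1
    (hΨ hs.2) (hΨ01 hx).2 (hΦΨ s hs1) (hΦΨ x hx)

lemma abs_sub_le_of_eq_volterra {u v : ℕ → ℝ → ℝ} (hΦ : Monotone Φ) (hΨ : Monotone Ψ)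
    (hΦ01 : MapsTo Φ (Icc 0 1) (Icc 0 1)) (hΦΨ : ∀ s ∈ Icc (0:ℝ) 1, |Φ s - Ψ s| ≤ D)
    (hu : ∀ k, Continuous (u k)) (hv : ∀ k, Continuous (v k))
    (hu_succ : ∀ k, ∀ x ∈ Icc (0:ℝ) 1, u (k + 1) x = volterra Φ (u k) x)
    (hv_succ : ∀ k, ∀ x ∈ Icc (0:ℝ) 1, v (k + 1) x = volterra Ψ (v k) x)
    (hv01 : ∀ k, ∀ s ∈ Icc (0:ℝ) 1, v k s ∈ Icc 0 (s ^ k / k !))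
    (h_one : ∀ x ∈ Icc (0:ℝ) 1, |volterra Φ (u 0) x - volterra Ψ (v 0) x| ≤ 2 * D * x)
    (m : ℕ) : ∀ x ∈ Icc (0:ℝ) 1, |u (m + 1) x - v (m + 1) x| ≤ 2 * D * x ^ (m + 1) / m ! := by
  induction m with
  | zero =>
    intro x hx
    rw [hu_succ 0 x hx, hv_succ 0 x hx]
    simpa using h_one x hx
  | succ m ih =>
    intro x hx
    rw [hu_succ _ x hx, hv_succ _ x hx]
    refine (abs_volterra_sub_volterra_le (α := 2 * D / m !) (k := m + 1) hΦ hΨ hΦ01 hΦΨ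
      (hu _) (hv _) hx (fun s hs => ?_) (fun s hs => ?_)).trans_eq ?_
    · exact (ih s ⟨hs.1, hs.2.trans hx.2⟩).trans_eq (by ring)
    · obtain ⟨hv0, hv1⟩ := hv01 _ s ⟨hs.1, hs.2.trans hx.2⟩
      exact (abs_of_nonneg hv0).trans_le hv1
    · rw [Nat.factorial_succ]
      push_cast
      field_simp

end Volterra

section Monomials

variable (μ : Measure ℝ)

lemma genP_two_mul_add_one (k : ℕ) (x : ℝ) :
    genP μ (2 * k + 1) x = ∫ t in (0:ℝ)..x, genP μ (2 * k) t ∂μ := by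
  simp [genP]

lemma genP_two_mul_add_two (k : ℕ) (x : ℝ) :
    genP μ (2 * k + 2) x = ∫ t in (0:ℝ)..x, genP μ (2 * k + 1) t := by
  simp [genP, Nat.odd_add_one]

lemma genQ_two_mul_add_one (k : ℕ) (x : ℝ) :
    genQ μ (2 * k + 1) x = ∫ t in (0:ℝ)..x, genQ μ (2 * k) t := by
  simp [genQ]

lemma genQ_two_mul_add_two (k : ℕ) (x : ℝ) :
    genQ μ (2 * k + 2) x = ∫ t in (0:ℝ)..x, genQ μ (2 * k + 1) t ∂μ := by
  simp [genQ, Nat.odd_add_one]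

lemma continuous_primitive_zero (ρ : Measure ℝ) [IsLocallyFiniteMeasure ρ] [NullSingletonClass ρ]
    {f : ℝ → ℝ} (hf : Continuous f) : Continuous fun x => ∫ t in (0:ℝ)..x, f t ∂ρ :=
  intervalIntegral.continuous_primitive (fun a b => hf.intervalIntegrable a b) 0

variable [IsFiniteMeasure μ] [NullSingletonClass μ]

lemma continuous_genP (n : ℕ) : Continuous (genP μ n) := by
  induction n with
  | zero => exact continuous_const
  | succ n ih =>
    rw [genP]
    split_ifs
    exacts [continuous_primitive_zero μ ih, continuous_primitive_zero volume ih]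

lemma continuous_genQ (n : ℕ) : Continuous (genQ μ n) := by
  induction n with
  | zero => exact continuous_const
  | succ n ih =>
    rw [genQ]
    split_ifs
    exacts [continuous_primitive_zero volume ih, continuous_primitive_zero μ ih]

lemma genP_one_sub_genP_one {s x : ℝ} (hsx : s ≤ x) :
    genP μ 1 x - genP μ 1 s = μ.real (Icc s x) := by
  change (∫ t in (0:ℝ)..x, (1:ℝ) ∂μ) - ∫ t in (0:ℝ)..s, (1:ℝ) ∂μ = _
  rw [intervalIntegral.integral_interval_sub_left intervalIntegrable_const intervalIntegrable_const,
    intervalIntegral.integral_const', Ioc_eq_empty_of_le hsx]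
  simpa using measureReal_congr Ioc_ae_eq_Icc

lemma monotone_genP_one : Monotone (genP μ 1) := fun _ _ hsx =>
  sub_nonneg.1 <| (genP_one_sub_genP_one μ hsx).symm ▸ measureReal_nonneg

lemma genP_one_eq_measureReal_Icc {x : ℝ} (hx : 0 ≤ x) : genP μ 1 x = μ.real (Icc 0 x) := by
  simpa [genP_two_mul_add_one μ 0 0] using genP_one_sub_genP_one μ hx

lemma integral_primitive_eq_volterra {f : ℝ → ℝ} (hf : Continuous f) {x : ℝ} (hx : 0 ≤ x) :
    ∫ t in (0:ℝ)..x, (∫ s in (0:ℝ)..t, f s) ∂μ = volterra (genP μ 1) f x := by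
  set g : ℝ → ℝ → ℝ := fun t s => (Ioc 0 t).indicator f s
  have hinner : ∀ t ∈ Ioc 0 x, ∫ s in (0:ℝ)..t, f s = ∫ s in Ioc 0 x, g t s := by
    intro t ht
    rw [intervalIntegral.integral_of_le ht.1.le, integral_indicator measurableSet_Ioc,
      Measure.restrict_restrict measurableSet_Ioc,
      inter_eq_left.2 (Ioc_subset_Ioc_right ht.2)]
  have hg : Integrable (Function.uncurry g)
      ((μ.restrict (Ioc 0 x)).prod (volume.restrict (Ioc 0 x))) := by
    have : Function.uncurry g = {p : ℝ × ℝ | p.2 ∈ Ioc 0 p.1}.indicator fun p => 1 * f p.2 := by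
      ext ⟨t, s⟩
      simp [g, indicator]
    rw [this]
    exact ((integrable_const (μ := μ.restrict (Ioc 0 x)) (1:ℝ)).mul_prod
      hf.integrableOn_Ioc).indicator ((measurableSet_lt measurable_const measurable_snd).inter
        (measurableSet_le measurable_snd measurable_fst))
  have hslice : ∀ s ∈ Ioc 0 x, ∫ t in Ioc 0 x, g t s ∂μ = f s * (genP μ 1 x - genP μ 1 s) := by
    intro s hs
    have hg_s : (fun t => g t s) = (Ici s).indicator fun _ => f s := by
      ext t
      simp [g, indicator, hs.1]
    have hset : Ici s ∩ Ioc 0 x = Icc s x := by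
      ext t
      simp only [mem_inter_iff, mem_Ici, mem_Ioc, mem_Icc]
      exact ⟨fun h => ⟨h.1, h.2.2⟩, fun h => ⟨h.1, hs.1.trans_le h.1, h.2⟩⟩
    rw [hg_s, integral_indicator_const _ measurableSet_Ici,
      measureReal_restrict_apply measurableSet_Ici, hset, genP_one_sub_genP_one μ hs.2,
      smul_eq_mul, mul_comm]
  rw [volterra, intervalIntegral.integral_of_le hx, intervalIntegral.integral_of_le hx,
    setIntegral_congr_fun measurableSet_Ioc hinner, integral_integral_swap hg]
  exact setIntegral_congr_fun measurableSet_Ioc hslice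

lemma genQ_two_mul_succ_eq_volterra (k : ℕ) {x : ℝ} (hx : 0 ≤ x) :
    genQ μ (2 * (k + 1)) x = volterra (genP μ 1) (genQ μ (2 * k)) x := by
  rw [mul_add_one, genQ_two_mul_add_two]
  simp_rw [genQ_two_mul_add_one]
  exact integral_primitive_eq_volterra μ (continuous_genQ μ _) hx

lemma genP_two_mul_succ_add_one_eq_volterra (k : ℕ) {x : ℝ} (hx : 0 ≤ x) :
    genP μ (2 * (k + 1) + 1) x = volterra (genP μ 1) (genP μ (2 * k + 1)) x := by
  rw [genP_two_mul_add_one, mul_add_one]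
  simp_rw [genP_two_mul_add_two]
  exact integral_primitive_eq_volterra μ (continuous_genP μ _) hx

end Monomials

section Estimates

variable (μ ν : Measure ℝ) [IsProbabilityMeasure μ] [NullSingletonClass μ]
  [IsProbabilityMeasure ν] [NullSingletonClass ν]

lemma mapsTo_genP_one : MapsTo (genP μ 1) (Icc 0 1) (Icc 0 1) := fun _ hx => by
  rw [genP_one_eq_measureReal_Icc μ hx.1]
  exact ⟨measureReal_nonneg, measureReal_le_one⟩

lemma genQ_two_mul_mem_Icc (k : ℕ) {x : ℝ} (hx : x ∈ Icc (0:ℝ) 1) :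
    genQ μ (2 * k) x ∈ Icc 0 (x ^ k / k !) := by
  induction k generalizing x with
  | zero => simp [genQ]
  | succ k ih =>
    rw [genQ_two_mul_succ_eq_volterra μ k hx.1]
    exact volterra_mem_Icc (monotone_genP_one μ) (mapsTo_genP_one μ) (continuous_genQ μ _)
      (fun _ => ih) hx

lemma genP_two_mul_add_one_mem_Icc (k : ℕ) {x : ℝ} (hx : x ∈ Icc (0:ℝ) 1) :
    genP μ (2 * k + 1) x ∈ Icc 0 (x ^ k / k !) := by
  induction k generalizing x with
  | zero => simpa using mapsTo_genP_one μ hx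
  | succ k ih =>
    rw [genP_two_mul_succ_add_one_eq_volterra μ k hx.1]
    exact volterra_mem_Icc (monotone_genP_one μ) (mapsTo_genP_one μ) (continuous_genP μ _)
      (fun _ => ih) hx

lemma abs_genP_one_sub_le_distSup {s : ℝ} (hs : s ∈ Icc (0:ℝ) 1) :
    |genP μ 1 s - genP ν 1 s| ≤ distSup μ ν := by
  rw [genP_one_eq_measureReal_Icc μ hs.1, genP_one_eq_measureReal_Icc ν hs.1]
  refine le_ciSup (f := fun y : Icc (0:ℝ) 1 => |μ.real (Icc 0 y) - ν.real (Icc 0 y)|)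
    ⟨1, ?_⟩ ⟨s, hs⟩
  rintro _ ⟨y, rfl⟩
  have hμy : μ.real (Icc 0 (y:ℝ)) ∈ Icc 0 1 := ⟨measureReal_nonneg, measureReal_le_one⟩
  have hνy : ν.real (Icc 0 (y:ℝ)) ∈ Icc 0 1 := ⟨measureReal_nonneg, measureReal_le_one⟩
  exact abs_sub_le_iff.2 ⟨by linarith [hμy.2, hνy.1], by linarith [hμy.1, hνy.2]⟩

lemma distSup_nonneg : 0 ≤ distSup μ ν :=
  (abs_nonneg _).trans (abs_genP_one_sub_le_distSup μ ν ⟨le_rfl, zero_le_one⟩)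

lemma abs_genQ_even_sub_le (m : ℕ) {x : ℝ} (hx : x ∈ Icc (0:ℝ) 1) :
    |genQ μ (2 * (m + 1)) x - genQ ν (2 * (m + 1)) x| ≤ 2 * distSup μ ν * x ^ (m + 1) / m ! := by
  refine abs_sub_le_of_eq_volterra (u := fun k => genQ μ (2 * k)) (v := fun k => genQ ν (2 * k))
    (monotone_genP_one μ) (monotone_genP_one ν) (mapsTo_genP_one μ)
    (fun _ => abs_genP_one_sub_le_distSup μ ν) (fun _ => continuous_genQ μ _)
    (fun _ => continuous_genQ ν _) (fun k _ hy => genQ_two_mul_succ_eq_volterra μ k hy.1)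
    (fun k _ hy => genQ_two_mul_succ_eq_volterra ν k hy.1)
    (fun k _ => genQ_two_mul_mem_Icc ν k) (fun y hy => ?_) m x hx
  simpa using abs_volterra_sub_volterra_le (α := 0) (k := 0) (monotone_genP_one μ)
    (monotone_genP_one ν) (mapsTo_genP_one μ) (fun _ => abs_genP_one_sub_le_distSup μ ν)
    (continuous_genQ μ 0) (continuous_genQ ν 0) hy (by simp [genQ]) (by simp [genQ])

lemma abs_genP_odd_sub_le (m : ℕ) {x : ℝ} (hx : x ∈ Icc (0:ℝ) 1) :
    |genP μ (2 * (m + 1) + 1) x - genP ν (2 * (m + 1) + 1) x|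
      ≤ 2 * distSup μ ν * x ^ (m + 1) / m ! :=
  abs_sub_le_of_eq_volterra (u := fun k => genP μ (2 * k + 1)) (v := fun k => genP ν (2 * k + 1))
    (monotone_genP_one μ) (monotone_genP_one ν) (mapsTo_genP_one μ)
    (fun _ => abs_genP_one_sub_le_distSup μ ν) (fun _ => continuous_genP μ _)
    (fun _ => continuous_genP ν _) (fun k _ hy => genP_two_mul_succ_add_one_eq_volterra μ k hy.1)
    (fun k _ hy => genP_two_mul_succ_add_one_eq_volterra ν k hy.1)
    (fun k _ => genP_two_mul_add_one_mem_Icc ν k)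
    (fun _ => abs_volterra_self_sub_volterra_self_le (monotone_genP_one μ) (monotone_genP_one ν)
      (continuous_genP μ 1) (continuous_genP ν 1) (mapsTo_genP_one μ) (mapsTo_genP_one ν)
      (fun _ => abs_genP_one_sub_le_distSup μ ν))
    m x hx

lemma abs_genQ_odd_sub_le (m : ℕ) {x : ℝ} (hx : x ∈ Icc (0:ℝ) 1) :
    |genQ μ (2 * (m + 1) + 1) x - genQ ν (2 * (m + 1) + 1) x|
      ≤ 2 * distSup μ ν * x ^ (m + 1) / m ! := by
  have hD := distSup_nonneg μ ν
  rw [genQ_two_mul_add_one, genQ_two_mul_add_one, ← intervalIntegral.integral_sub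
    ((continuous_genQ μ _).intervalIntegrable _ _) ((continuous_genQ ν _).intervalIntegrable _ _)]
  refine (abs_intervalIntegral_le_mul_pow (c := 2 * distSup μ ν / m !) (n := m + 1) hx.1
    fun s hs => ?_).trans ?_
  · exact (abs_genQ_even_sub_le μ ν m ⟨hs.1.le, hs.2.trans hx.2⟩).trans_eq (by ring)
  · calc 2 * distSup μ ν / m ! * x ^ (m + 1 + 1) / (↑(m + 1) + 1)
        ≤ 2 * distSup μ ν / m ! * x ^ (m + 1) := by
          rw [mul_div_assoc]
          gcongr
          exact (div_le_self (pow_nonneg hx.1 _) (by push_cast; linarith)).trans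
            (pow_le_pow_of_le_one hx.1 hx.2 (by omega))
      _ = _ := by ring

lemma abs_genP_even_sub_le (m : ℕ) {x : ℝ} (hx : x ∈ Icc (0:ℝ) 1) :
    |genP μ (2 * (m + 1)) x - genP ν (2 * (m + 1)) x| ≤ 2 * distSup μ ν * x ^ (m + 1) / m ! := by
  have hD := distSup_nonneg μ ν
  rw [mul_add_one, genP_two_mul_add_two, genP_two_mul_add_two, ← intervalIntegral.integral_sub
    ((continuous_genP μ _).intervalIntegrable _ _) ((continuous_genP ν _).intervalIntegrable _ _)]
  cases m with
  | zero =>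
    refine (abs_intervalIntegral_le_mul_pow (c := distSup μ ν) (n := 0) hx.1
      fun s hs => ?_).trans ?_
    · simpa using abs_genP_one_sub_le_distSup μ ν ⟨hs.1.le, hs.2.trans hx.2⟩
    · simp
      nlinarith [hx.1]
  | succ n =>
    refine (abs_intervalIntegral_le_mul_pow (c := 2 * distSup μ ν / n !) (n := n + 1) hx.1
      fun s hs => ?_).trans ?_
    · exact (abs_genP_odd_sub_le μ ν n ⟨hs.1.le, hs.2.trans hx.2⟩).trans_eq (by ring)
    · have hA : 0 ≤ 2 * distSup μ ν * x ^ (n + 2) / n ! := by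
        have := hx.1
        positivity
      calc 2 * distSup μ ν / n ! * x ^ (n + 1 + 1) / (↑(n + 1) + 1)
          = 2 * distSup μ ν * x ^ (n + 2) / n ! / (n + 2) := by push_cast; ring
        _ ≤ 2 * distSup μ ν * x ^ (n + 2) / n ! / (n + 1) :=
          div_le_div_of_nonneg_left hA (by positivity) (by linarith)
        _ = 2 * distSup μ ν * x ^ (n + 1 + 1) / (n + 1)! := by
          rw [Nat.factorial_succ]
          push_cast
          field_simp

end Estimates

theorem stmt_3_general (μ ν : Measure ℝ) [IsProbabilityMeasure μ] [IsProbabilityMeasure ν]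
    (hμna : ∀ x : ℝ, μ {x} = 0) (hνna : ∀ x : ℝ, ν {x} = 0) :
    ∀ x ∈ Set.Icc (0:ℝ) 1, ∀ k : ℕ, 1 ≤ k →
      |genQ μ (2 * k) x - genQ ν (2 * k) x|
          ≤ 2 * distSup μ ν * x ^ k / (Nat.factorial (k - 1) : ℝ) ∧
      |genQ μ (2 * k + 1) x - genQ ν (2 * k + 1) x|
          ≤ 2 * distSup μ ν * x ^ k / (Nat.factorial (k - 1) : ℝ) ∧
      |genP μ (2 * k) x - genP ν (2 * k) x|
          ≤ 2 * distSup μ ν * x ^ k / (Nat.factorial (k - 1) : ℝ) ∧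
      |genP μ (2 * k + 1) x - genP ν (2 * k + 1) x|
          ≤ 2 * distSup μ ν * x ^ k / (Nat.factorial (k - 1) : ℝ) := by
  intro x hx k hk
  obtain ⟨m, rfl⟩ := Nat.exists_eq_add_of_le' hk
  have : NullSingletonClass μ := ⟨hμna⟩
  have : NullSingletonClass ν := ⟨hνna⟩
  rw [Nat.add_sub_cancel]
  exact ⟨abs_genQ_even_sub_le μ ν m hx, abs_genQ_odd_sub_le μ ν m hx,
    abs_genP_even_sub_le μ ν m hx, abs_genP_odd_sub_le μ ν m hx⟩

theorem stmt_3 (μ ν : Measure ℝ) [IsProbabilityMeasure μ] [IsProbabilityMeasure ν]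
    (hμs : μ (Set.Icc (0:ℝ) 1)ᶜ = 0) (hνs : ν (Set.Icc (0:ℝ) 1)ᶜ = 0)
    (hμna : ∀ x : ℝ, μ {x} = 0) (hνna : ∀ x : ℝ, ν {x} = 0) :
    ∀ x ∈ Set.Icc (0:ℝ) 1, ∀ k : ℕ, 1 ≤ k →
      |genQ μ (2 * k) x - genQ ν (2 * k) x|
          ≤ 2 * distSup μ ν * x ^ k / (Nat.factorial (k - 1) : ℝ) ∧
      |genQ μ (2 * k + 1) x - genQ ν (2 * k + 1) x|
          ≤ 2 * distSup μ ν * x ^ k / (Nat.factorial (k - 1) : ℝ) ∧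
      |genP μ (2 * k) x - genP ν (2 * k) x|
          ≤ 2 * distSup μ ν * x ^ k / (Nat.factorial (k - 1) : ℝ) ∧
      |genP μ (2 * k + 1) x - genP ν (2 * k + 1) x|
          ≤ 2 * distSup μ ν * x ^ k / (Nat.factorial (k - 1) : ℝ) :=
  stmt_3_general μ ν hμna hνna
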